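/- arXiv:1802.02302 — 11 statements merged into one kernel-verified Lean document; each statement's English description precedes it below -/
import Mathlib

section
/- Let X, Y be metric spaces, Φ : X → S(Y) a multifunction with nonempty values on Dom Φ ≠ ∅, and u : Gr(Φ) → ℝ ∪ {±∞}. Then u is K-inf-compact on Gr(Φ) (i.e., for every nonempty compact C ⊆ Dom Φ, u is inf-compact on Gr_C(Φ)) if and only if: (i) u is lower semi-continuous on Gr(Φ), and (ii) whenever a sequence {x_n} in Dom Φ converges in X to a limit x ∈ Dom Φ, every sequence {y_n} with y_n ∈ Φ(x_n) such that {u(x_n, y_n)} is bounded above has a limit point y ∈ Φ(x). -/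
open Filter Topology

/-- Characterization of `K`-inf-compactness (Feinberg–Kasyanov–Zgurovsky, Lemma 2):
a function `u` on the graph of a multifunction `Φ` between metric spaces is
`K`-inf-compact iff it is (sequentially) lower semi-continuous on the graph and
satisfies the limit-point condition for sequences with values bounded above. -/
theorem kInfCompact_iff {X Y : Type*} [MetricSpace X] [MetricSpace Y]
    (Φ : X → Set Y) (hdom : {x | (Φ x).Nonempty}.Nonempty)
    (u : X → Y → EReal) :
    (∀ C : Set X, C.Nonempty → IsCompact C → C ⊆ {x | (Φ x).Nonempty} →
      ∀ lam : ℝ,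
        IsCompact {p : X × Y | p.1 ∈ C ∧ p.2 ∈ Φ p.1 ∧ u p.1 p.2 ≤ (lam : EReal)})
    ↔
    ((∀ x : X, ∀ y ∈ Φ x, ∀ (xs : ℕ → X) (ys : ℕ → Y),
        (∀ n, ys n ∈ Φ (xs n)) →
        Tendsto (fun n => ((xs n, ys n) : X × Y)) atTop (𝓝 (x, y)) →
        u x y ≤ liminf (fun n => u (xs n) (ys n)) atTop)
     ∧
     (∀ (xs : ℕ → X) (x : X), (∀ n, (Φ (xs n)).Nonempty) → (Φ x).Nonempty →
        Tendsto xs atTop (𝓝 x) →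
        ∀ ys : ℕ → Y, (∀ n, ys n ∈ Φ (xs n)) →
        (∃ M : ℝ, ∀ n, u (xs n) (ys n) ≤ (M : EReal)) →
        ∃ y ∈ Φ x, ∃ φ : ℕ → ℕ, StrictMono φ ∧
          Tendsto (fun n => ys (φ n)) atTop (𝓝 y))) := by
  constructor
  · intro H
    constructor
    · -- lower semicontinuity
      intro x y hy xs ys hys hconv
      by_contra hlt
      push_neg at hlt
      obtain ⟨lam, hlam1, hlam2⟩ := EReal.exists_between_coe_real hlt
      have hxs : Tendsto xs atTop (𝓝 x) :=
        (continuous_fst.tendsto _).comp hconv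
      have hC : IsCompact (insert x (Set.range xs)) := hxs.isCompact_insert_range
      have hCdom : insert x (Set.range xs) ⊆ {x | (Φ x).Nonempty} := by
        rintro z (rfl | ⟨n, rfl⟩)
        · exact ⟨y, hy⟩
        · exact ⟨ys n, hys n⟩
      have hK := H _ ⟨x, Set.mem_insert _ _⟩ hC hCdom lam
      -- frequently u (xs n) (ys n) < lam
      have hfreq : ∃ᶠ n in atTop, u (xs n) (ys n) < (lam : EReal) :=
        frequently_lt_of_liminf_lt (by isBoundedDefault) hlam1
      obtain ⟨φ, hφmono, hφ⟩ := extraction_of_frequently_atTop hfreq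
      have hmem : ∀ n, ((xs (φ n), ys (φ n)) : X × Y) ∈
          {p : X × Y | p.1 ∈ insert x (Set.range xs) ∧ p.2 ∈ Φ p.1 ∧
            u p.1 p.2 ≤ (lam : EReal)} := by
        intro n
        exact ⟨Set.mem_insert_iff.2 (Or.inr ⟨φ n, rfl⟩), hys (φ n), (hφ n).le⟩
      have hclosed := hK.isClosed
      have htend : Tendsto (fun n => ((xs (φ n), ys (φ n)) : X × Y)) atTop (𝓝 (x, y)) :=
        hconv.comp (hφmono.tendsto_atTop)
      have hxyK := hclosed.mem_of_tendsto htend (Eventually.of_forall hmem)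
      exact absurd hxyK.2.2 (not_le.2 hlam2)
    · -- limit point condition
      intro xs x hnem hxnem hxs ys hys ⟨M, hM⟩
      have hC : IsCompact (insert x (Set.range xs)) := hxs.isCompact_insert_range
      have hCdom : insert x (Set.range xs) ⊆ {x | (Φ x).Nonempty} := by
        rintro z (rfl | ⟨n, rfl⟩)
        · exact hxnem
        · exact hnem n
      have hK := H _ ⟨x, Set.mem_insert _ _⟩ hC hCdom M
      have hmem : ∀ n, ((xs n, ys n) : X × Y) ∈
          {p : X × Y | p.1 ∈ insert x (Set.range xs) ∧ p.2 ∈ Φ p.1 ∧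
            u p.1 p.2 ≤ (M : EReal)} :=
        fun n => ⟨Set.mem_insert_iff.2 (Or.inr ⟨n, rfl⟩), hys n, hM n⟩
      obtain ⟨⟨a, b⟩, habK, φ, hφmono, hφtend⟩ := hK.isSeqCompact hmem
      have hfst : Tendsto (fun n => xs (φ n)) atTop (𝓝 a) :=
        (continuous_fst.tendsto _).comp hφtend
      have hsnd : Tendsto (fun n => ys (φ n)) atTop (𝓝 b) :=
        (continuous_snd.tendsto _).comp hφtend
      have hax : a = x :=
        tendsto_nhds_unique hfst (hxs.comp hφmono.tendsto_atTop)
      exact ⟨b, hax ▸ habK.2.1, φ, hφmono, hsnd⟩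
  · rintro ⟨hlsc, hlp⟩ C hCne hCcomp hCdom lam
    apply IsSeqCompact.isCompact
    intro p hp
    set xs : ℕ → X := fun n => (p n).1 with hxs
    set ys : ℕ → Y := fun n => (p n).2 with hys
    have h1 : ∀ n, xs n ∈ C := fun n => (hp n).1
    have h2 : ∀ n, ys n ∈ Φ (xs n) := fun n => (hp n).2.1
    have h3 : ∀ n, u (xs n) (ys n) ≤ (lam : EReal) := fun n => (hp n).2.2
    obtain ⟨x, hxC, φ, hφmono, hφtend⟩ := hCcomp.tendsto_subseq h1
    obtain ⟨y, hyΦ, ψ, hψmono, hψtend⟩ :=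
      hlp (fun n => xs (φ n)) x (fun n => hCdom (h1 (φ n))) (hCdom hxC) hφtend
        (fun n => ys (φ n)) (fun n => h2 (φ n)) ⟨lam, fun n => h3 (φ n)⟩
    refine ⟨(x, y), ⟨hxC, hyΦ, ?_⟩, φ ∘ ψ, hφmono.comp hψmono, ?_⟩
    · have htend : Tendsto (fun n => ((xs (φ (ψ n)), ys (φ (ψ n))) : X × Y)) atTop
          (𝓝 (x, y)) :=
        Tendsto.prodMk_nhds (hφtend.comp hψmono.tendsto_atTop) hψtend
      have := hlsc x y hyΦ _ _ (fun n => h2 (φ (ψ n))) htend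
      refine this.trans ?_
      exact liminf_le_of_frequently_le'
        (Frequently.of_forall (fun n => h3 (φ (ψ n))))
    · exact Tendsto.prodMk_nhds (hφtend.comp hψmono.tendsto_atTop) hψtend
end

section
/- Every A-lower semi-continuous multifunction Φ_B : Gr(Φ_A) ⊆ X × A → S(B) is lower semi-continuous: for each (x,a) ∈ Gr(Φ_A), every sequence (x_n, a_n) → (x,a) with a_n ∈ Φ_A(x_n), and every b ∈ Φ_B(x,a), there is a sequence b_n ∈ Φ_B(x_n, a_n) with b_n → b. -/
open Filter Topology

/-- Every `A`-lower semi-continuous multifunction `Φ_B : Gr(Φ_A) → S(B)` is lower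
semi-continuous. -/
theorem lsc_of_alsc {X A B : Type*}
    [MetricSpace X] [MetricSpace A] [MetricSpace B]
    (ΦA : X → Set A) (hA : ∀ x, (ΦA x).Nonempty)
    (ΦB : X → A → Set B) (hB : ∀ x, ∀ a ∈ ΦA x, (ΦB x a).Nonempty)
    (halsc : ∀ (xs : ℕ → X) (x : X), Tendsto xs atTop (𝓝 x) →
      ∀ as : ℕ → A, (∀ n, as n ∈ ΦA (xs n)) →
      ∀ a ∈ ΦA x, ∀ b ∈ ΦB x a,
      ∃ bs : ℕ → B, (∀ n, bs n ∈ ΦB (xs n) (as n)) ∧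
        ∃ φ : ℕ → ℕ, StrictMono φ ∧ Tendsto (fun n => bs (φ n)) atTop (𝓝 b)) :
    ∀ (x : X) (a : A), a ∈ ΦA x →
    ∀ (xs : ℕ → X) (as : ℕ → A), (∀ n, as n ∈ ΦA (xs n)) →
    Tendsto (fun n => ((xs n, as n) : X × A)) atTop (𝓝 (x, a)) →
    ∀ b ∈ ΦB x a, ∃ bs : ℕ → B, (∀ n, bs n ∈ ΦB (xs n) (as n)) ∧
      Tendsto bs atTop (𝓝 b) := by
  intro x a ha xs as has hconv b hb
  have hxs : Tendsto xs atTop (𝓝 x) := (continuous_fst.tendsto _).comp hconv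
  have has' : Tendsto as atTop (𝓝 a) := (continuous_snd.tendsto _).comp hconv
  set f : ℕ → ℝ := fun n => Metric.infDist b (ΦB (xs n) (as n)) with hf
  have hne : ∀ n, (ΦB (xs n) (as n)).Nonempty := fun n => hB _ _ (has n)
  have hf0 : ∀ n, 0 ≤ f n := fun n => Metric.infDist_nonneg
  -- f → 0
  have hften : Tendsto f atTop (𝓝 0) := by
    rw [Metric.tendsto_atTop]
    intro ε hε
    by_contra hcon
    push_neg at hcon
    have hfreq : ∃ᶠ n in atTop, ε ≤ f n := by
      rw [frequently_atTop]
      intro N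
      obtain ⟨n, hn, hd⟩ := hcon N
      refine ⟨n, hn, ?_⟩
      rw [Real.dist_eq, sub_zero, abs_of_nonneg (hf0 n)] at hd
      exact hd
    obtain ⟨ψ, hψ, hψε⟩ := extraction_of_frequently_atTop hfreq
    obtain ⟨bs, hbs, φ, hφ, hφten⟩ :=
      halsc (xs ∘ ψ) x (hxs.comp hψ.tendsto_atTop) (as ∘ ψ) (fun n => has (ψ n)) a ha b hb
    have : ∀ k, ε ≤ dist b (bs (φ k)) := fun k =>
      le_trans (hψε (φ k)) (Metric.infDist_le_dist_of_mem (hbs (φ k)))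
    have hlim : Tendsto (fun k => dist b (bs (φ k))) atTop (𝓝 0) := by
      simpa using ((tendsto_const_nhds : Tendsto (fun _ : ℕ => b) atTop (𝓝 b)).dist hφten)
    have := ge_of_tendsto' hlim this
    linarith
  -- choose bs n close to infDist
  have hchoice : ∀ n, ∃ y ∈ ΦB (xs n) (as n), dist b y < f n + 1 / (n + 1) := by
    intro n
    have hlt : Metric.infDist b (ΦB (xs n) (as n)) < f n + 1 / (n + 1) := by
      have : (0:ℝ) < 1 / (n + 1) := by positivity
      simpa [hf] using lt_add_of_pos_right (f n) this
    exact (Metric.infDist_lt_iff (hne n)).mp hlt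
  choose bs hbsmem hbsd using hchoice
  refine ⟨bs, hbsmem, ?_⟩
  rw [tendsto_iff_dist_tendsto_zero]
  have hupper : Tendsto (fun n => f n + 1 / (n + 1 : ℝ)) atTop (𝓝 0) := by
    have h2 : Tendsto (fun n : ℕ => 1 / (n + 1 : ℝ)) atTop (𝓝 0) :=
      tendsto_one_div_add_atTop_nhds_zero_nat
    simpa using hften.add h2
  refine squeeze_zero (fun n => dist_nonneg) (fun n => ?_) hupper
  rw [dist_comm]
  exact (hbsd n).le
end

section
/- Let X, A, B be metric spaces, Φ_A : X → S(A) strict, Φ_B : Gr(Φ_A) → S(B) a lower semi-continuous multifunction, and f : Gr(Φ_B) → ℝ̄ a lower semi-continuous function. Then the worst-loss function f^♯(x,a) := sup_{b ∈ Φ_B(x,a)} f(x,a,b) is lower semi-continuous on Gr(Φ_A). -/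
open Filter Topology

/-- If `Φ_B` is a lower semi-continuous multifunction on `Gr(Φ_A)` and `f` is lower
semi-continuous on `Gr(Φ_B)`, then the worst-loss function
`f♯(x,a) = sup_{b ∈ Φ_B(x,a)} f(x,a,b)` is lower semi-continuous on `Gr(Φ_A)`. -/
theorem worstLoss_lsc {X A B : Type*}
    [MetricSpace X] [MetricSpace A] [MetricSpace B]
    (ΦA : X → Set A) (hA : ∀ x, (ΦA x).Nonempty)
    (ΦB : X → A → Set B) (hB : ∀ x, ∀ a ∈ ΦA x, (ΦB x a).Nonempty)
    (f : X → A → B → EReal)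
    (hΦBlsc : ∀ (x : X) (a : A), a ∈ ΦA x →
      ∀ (xs : ℕ → X) (as : ℕ → A), (∀ n, as n ∈ ΦA (xs n)) →
      Tendsto (fun n => ((xs n, as n) : X × A)) atTop (𝓝 (x, a)) →
      ∀ b ∈ ΦB x a, ∃ bs : ℕ → B, (∀ n, bs n ∈ ΦB (xs n) (as n)) ∧
        Tendsto bs atTop (𝓝 b))
    (hflsc : ∀ (x : X) (a : A) (b : B), a ∈ ΦA x → b ∈ ΦB x a →
      ∀ (xs : ℕ → X) (as : ℕ → A) (bs : ℕ → B),
      (∀ n, as n ∈ ΦA (xs n)) → (∀ n, bs n ∈ ΦB (xs n) (as n)) →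
      Tendsto (fun n => ((xs n, as n, bs n) : X × A × B)) atTop (𝓝 (x, a, b)) →
      f x a b ≤ liminf (fun n => f (xs n) (as n) (bs n)) atTop) :
    ∀ (x : X) (a : A), a ∈ ΦA x →
    ∀ (xs : ℕ → X) (as : ℕ → A), (∀ n, as n ∈ ΦA (xs n)) →
    Tendsto (fun n => ((xs n, as n) : X × A)) atTop (𝓝 (x, a)) →
    (⨆ b ∈ ΦB x a, f x a b) ≤
      liminf (fun n => ⨆ b ∈ ΦB (xs n) (as n), f (xs n) (as n) b) atTop := by
  intro x a ha xs as has htend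
  apply iSup₂_le
  intro b hb
  obtain ⟨bs, hbs, hbst⟩ := hΦBlsc x a ha xs as has htend b hb
  have h1 : f x a b ≤ liminf (fun n => f (xs n) (as n) (bs n)) atTop := by
    apply hflsc x a b ha hb xs as bs has hbs
    rw [nhds_prod_eq, nhds_prod_eq]
    exact Tendsto.prodMk ((continuous_fst.tendsto _).comp htend)
      (Tendsto.prodMk ((continuous_snd.tendsto _).comp htend) hbst)
  refine h1.trans (liminf_le_liminf ?_)
  filter_upwards with n
  exact le_iSup₂ (f := fun b' (_ : b' ∈ ΦB (xs n) (as n)) => f (xs n) (as n) b') (bs n) (hbs n)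
end

section
/- Let X, A, B be metric spaces, Φ_A : X → S(A) a lower semi-continuous multifunction, Φ_B : Gr(Φ_A) → S(B), and f : Gr(Φ_B) → ℝ K-sup-compact on Gr(Φ_B) (viewing Gr(Φ_B) as the graph of the multifunction (x,a) ↦ Φ_B(x,a) over Dom = Gr(Φ_A)). Then the minimax value function v^♯(x) := inf_{a ∈ Φ_A(x)} sup_{b ∈ Φ_B(x,a)} f(x,a,b) is upper semi-continuous on X with values in ℝ ∪ {−∞}. -/
open Filter Topology

private lemma sup_ne_top_aux {X A B : Type*}
    [MetricSpace X] [MetricSpace A] [MetricSpace B]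
    (ΦA : X → Set A) (ΦB : X → A → Set B) (f : X → A → B → ℝ)
    (hKsup : ∀ C : Set (X × A), C.Nonempty → IsCompact C →
      C ⊆ {p : X × A | p.2 ∈ ΦA p.1} →
      ∀ lam : ℝ, IsCompact {q : (X × A) × B |
        q.1 ∈ C ∧ q.2 ∈ ΦB q.1.1 q.1.2 ∧ lam ≤ f q.1.1 q.1.2 q.2})
    (x : X) (a : A) (ha : a ∈ ΦA x) :
    (⨆ b ∈ ΦB x a, ((f x a b : ℝ) : EReal)) ≠ ⊤ := by
  intro htop
  set S : ℕ → Set ((X × A) × B) := fun n => {q : (X × A) × B |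
      q.1 ∈ ({(x, a)} : Set (X × A)) ∧ q.2 ∈ ΦB q.1.1 q.1.2 ∧
        ((n : ℝ)) ≤ f q.1.1 q.1.2 q.2} with hS
  have hsub : ({(x, a)} : Set (X × A)) ⊆ {p : X × A | p.2 ∈ ΦA p.1} := by
    simp [Set.singleton_subset_iff, ha]
  have hScomp : ∀ n, IsCompact (S n) := fun n =>
    hKsup {(x, a)} ⟨(x, a), rfl⟩ isCompact_singleton hsub n
  have hmono : ∀ n, S (n + 1) ⊆ S n := by
    intro n q hq
    refine ⟨hq.1, hq.2.1, le_trans ?_ hq.2.2⟩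
    exact_mod_cast Nat.le_succ n
  have hne : ∀ n, (S n).Nonempty := by
    intro n
    have hlt : ((n : ℝ) : EReal) < ⨆ b ∈ ΦB x a, ((f x a b : ℝ) : EReal) := by
      rw [htop]; exact EReal.coe_lt_top _
    rw [lt_iSup_iff] at hlt
    obtain ⟨b, hb⟩ := hlt
    rw [lt_iSup_iff] at hb
    obtain ⟨hbmem, hb⟩ := hb
    exact ⟨((x, a), b), rfl, hbmem, by exact_mod_cast hb.le⟩
  obtain ⟨q, hq⟩ := IsCompact.nonempty_iInter_of_sequence_nonempty_isCompact_isClosed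
    S hmono hne (hScomp 0) (fun n => (hScomp n).isClosed)
  simp only [Set.mem_iInter] at hq
  obtain ⟨n, hn⟩ := exists_nat_gt (f q.1.1 q.1.2 q.2)
  exact absurd (hq n).2.2 (not_le.2 hn)

/-- If `Φ_A` is lower semi-continuous and `f` is `K`-sup-compact on `Gr(Φ_B)`, then
the minimax value function `v♯(x) = inf_{a ∈ Φ_A(x)} sup_{b ∈ Φ_B(x,a)} f(x,a,b)`
is upper semi-continuous on `X` and takes values in `ℝ ∪ {-∞}`. -/
theorem minimax_usc {X A B : Type*}
    [MetricSpace X] [MetricSpace A] [MetricSpace B]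
    (ΦA : X → Set A) (hA : ∀ x, (ΦA x).Nonempty)
    (ΦB : X → A → Set B) (hB : ∀ x, ∀ a ∈ ΦA x, (ΦB x a).Nonempty)
    (f : X → A → B → ℝ)
    (hΦAlsc : ∀ (x : X), ∀ (xs : ℕ → X), Tendsto xs atTop (𝓝 x) →
      ∀ a ∈ ΦA x, ∃ as : ℕ → A, (∀ n, as n ∈ ΦA (xs n)) ∧
        Tendsto as atTop (𝓝 a))
    (hKsup : ∀ C : Set (X × A), C.Nonempty → IsCompact C →
      C ⊆ {p : X × A | p.2 ∈ ΦA p.1} →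
      ∀ lam : ℝ, IsCompact {q : (X × A) × B |
        q.1 ∈ C ∧ q.2 ∈ ΦB q.1.1 q.1.2 ∧ lam ≤ f q.1.1 q.1.2 q.2}) :
    (∀ (x : X) (xs : ℕ → X), Tendsto xs atTop (𝓝 x) →
      limsup (fun n => ⨅ a ∈ ΦA (xs n), ⨆ b ∈ ΦB (xs n) a,
          ((f (xs n) a b : ℝ) : EReal)) atTop ≤
        ⨅ a ∈ ΦA x, ⨆ b ∈ ΦB x a, ((f x a b : ℝ) : EReal)) ∧
    (∀ x : X, (⨅ a ∈ ΦA x, ⨆ b ∈ ΦB x a, ((f x a b : ℝ) : EReal)) ≠ ⊤) := by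
  constructor
  · intro x xs hxs
    refine le_iInf₂ fun a ha => ?_
    obtain ⟨as, has, hconv⟩ := hΦAlsc x xs hxs a ha
    set L : EReal := ⨆ b ∈ ΦB x a, ((f x a b : ℝ) : EReal) with hL
    have step1 : limsup (fun n => ⨅ a' ∈ ΦA (xs n), ⨆ b ∈ ΦB (xs n) a',
        ((f (xs n) a' b : ℝ) : EReal)) atTop ≤
        limsup (fun n => ⨆ b ∈ ΦB (xs n) (as n), ((f (xs n) (as n) b : ℝ) : EReal)) atTop := by
      apply limsup_le_limsup (Eventually.of_forall fun n => iInf₂_le (as n) (has n)) <;>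
        isBoundedDefault
    refine le_trans step1 ?_
    -- now show limsup g_n ≤ L
    by_contra hcon
    push_neg at hcon
    -- L is not ⊥ (ΦB x a nonempty), pick real λ between
    obtain ⟨lam, hLlam, hlamlim⟩ := EReal.exists_between_coe_real hcon
    have hfreq : ∃ᶠ n in atTop,
        (lam : EReal) < ⨆ b ∈ ΦB (xs n) (as n), ((f (xs n) (as n) b : ℝ) : EReal) :=
      frequently_lt_of_lt_limsup (by isBoundedDefault) hlamlim
    obtain ⟨φ, hφmono, hφ⟩ := extraction_of_frequently_atTop hfreq
    -- choose b_k
    have hbk : ∀ k, ∃ b, b ∈ ΦB (xs (φ k)) (as (φ k)) ∧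
        (lam : EReal) < ((f (xs (φ k)) (as (φ k)) b : ℝ) : EReal) := by
      intro k
      have := hφ k
      rw [lt_iSup_iff] at this
      obtain ⟨b, hb⟩ := this
      rw [lt_iSup_iff] at hb
      exact ⟨b, hb.1, hb.2⟩
    choose bk hbkmem hbklt using hbk
    -- compact set C
    set C : Set (X × A) := insert (x, a) (Set.range fun n => (xs n, as n)) with hC
    have hCcomp : IsCompact C := by
      have : Tendsto (fun n => (xs n, as n)) atTop (𝓝 (x, a)) :=
        hxs.prodMk_nhds hconv
      exact this.isCompact_insert_range
    have hCsub : C ⊆ {p : X × A | p.2 ∈ ΦA p.1} := by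
      rintro p (rfl | ⟨n, rfl⟩)
      · exact ha
      · exact has n
    have hScomp := hKsup C ⟨(x, a), Set.mem_insert _ _⟩ hCcomp hCsub lam
    set S : Set ((X × A) × B) := {q : (X × A) × B |
        q.1 ∈ C ∧ q.2 ∈ ΦB q.1.1 q.1.2 ∧ lam ≤ f q.1.1 q.1.2 q.2} with hSdef
    have hqmem : ∀ k, (((xs (φ k), as (φ k)), bk k) : (X × A) × B) ∈ S := by
      intro k
      refine ⟨Set.mem_insert_of_mem _ ⟨φ k, rfl⟩, hbkmem k, ?_⟩
      exact_mod_cast (hbklt k).le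
    obtain ⟨q, hqS, ψ, hψmono, hψconv⟩ :=
      hScomp.tendsto_subseq hqmem
    -- identify q.1 = (x, a)
    have h1 : Tendsto (fun j => (xs (φ (ψ j)), as (φ (ψ j)))) atTop (𝓝 (x, a)) :=
      ((hxs.prodMk_nhds hconv).comp (hφmono.comp hψmono).tendsto_atTop)
    have h2 : Tendsto (fun j => (xs (φ (ψ j)), as (φ (ψ j)))) atTop (𝓝 q.1) := by
      have := (continuous_fst.tendsto q).comp hψconv
      exact this
    have hq1 : q.1 = (x, a) := tendsto_nhds_unique h2 h1
    have hmemB : q.2 ∈ ΦB x a := by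
      have := hqS.2.1; rw [hq1] at this; exact this
    have hlef : lam ≤ f x a q.2 := by
      have := hqS.2.2; rw [hq1] at this; exact this
    have hle : ((f x a q.2 : ℝ) : EReal) ≤ L := le_iSup₂ (f := fun b _ => ((f x a b : ℝ) : EReal)) q.2 hmemB
    have : (lam : EReal) ≤ L := le_trans (by exact_mod_cast hlef) hle
    exact absurd hLlam (not_lt.2 this)
  · intro x
    obtain ⟨a, ha⟩ := hA x
    have h1 : (⨅ a ∈ ΦA x, ⨆ b ∈ ΦB x a, ((f x a b : ℝ) : EReal)) ≤
        ⨆ b ∈ ΦB x a, ((f x a b : ℝ) : EReal) := iInf₂_le a ha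
    have h2 := sup_ne_top_aux ΦA ΦB f hKsup x a ha
    exact ne_top_of_le_ne_top h2 h1
end

section
/- Under the assumptions that Φ_A : X → S(A) is lower semi-continuous and f : Gr(Φ_B) → ℝ is K-sup-compact on Gr(Φ_B), the worst-loss function f^♯(x,a) = sup_{b ∈ Φ_B(x,a)} f(x,a,b) is upper semi-continuous on Gr(Φ_A) with values in ℝ ∪ {−∞}. -/
open Filter Topology

/-- If `Φ_A` is lower semi-continuous and `f` is `K`-sup-compact on `Gr(Φ_B)`, then
the worst-loss function `f♯(x,a) = sup_{b ∈ Φ_B(x,a)} f(x,a,b)` is upper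
semi-continuous on `Gr(Φ_A)` and takes values in `ℝ ∪ {-∞}`. -/
theorem worstLoss_usc {X A B : Type*}
    [MetricSpace X] [MetricSpace A] [MetricSpace B]
    (ΦA : X → Set A) (hA : ∀ x, (ΦA x).Nonempty)
    (ΦB : X → A → Set B) (hB : ∀ x, ∀ a ∈ ΦA x, (ΦB x a).Nonempty)
    (f : X → A → B → ℝ)
    (hΦAlsc : ∀ (x : X), ∀ (xs : ℕ → X), Tendsto xs atTop (𝓝 x) →
      ∀ a ∈ ΦA x, ∃ as : ℕ → A, (∀ n, as n ∈ ΦA (xs n)) ∧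
        Tendsto as atTop (𝓝 a))
    (hKsup : ∀ C : Set (X × A), C.Nonempty → IsCompact C →
      C ⊆ {p : X × A | p.2 ∈ ΦA p.1} →
      ∀ lam : ℝ, IsCompact {q : (X × A) × B |
        q.1 ∈ C ∧ q.2 ∈ ΦB q.1.1 q.1.2 ∧ lam ≤ f q.1.1 q.1.2 q.2}) :
    (∀ (x : X) (a : A), a ∈ ΦA x →
      ∀ (xs : ℕ → X) (as : ℕ → A), (∀ n, as n ∈ ΦA (xs n)) →
      Tendsto (fun n => ((xs n, as n) : X × A)) atTop (𝓝 (x, a)) →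
      limsup (fun n => ⨆ b ∈ ΦB (xs n) (as n),
          ((f (xs n) (as n) b : ℝ) : EReal)) atTop ≤
        ⨆ b ∈ ΦB x a, ((f x a b : ℝ) : EReal)) ∧
    (∀ (x : X) (a : A), a ∈ ΦA x →
      (⨆ b ∈ ΦB x a, ((f x a b : ℝ) : EReal)) ≠ ⊤) := by
  have hbdd : ∀ x a, a ∈ ΦA x → ∃ M : ℝ, ∀ b ∈ ΦB x a, f x a b ≤ M := by
    intro x a ha
    by_contra h
    push_neg at h
    set V : ℕ → Set ((X × A) × B) := fun n =>
      {q | q.1 ∈ ({(x, a)} : Set (X × A)) ∧ q.2 ∈ ΦB q.1.1 q.1.2 ∧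
        (n : ℝ) ≤ f q.1.1 q.1.2 q.2} with hV
    have hVc : ∀ n, IsCompact (V n) := fun n =>
      hKsup {(x, a)} (Set.singleton_nonempty _) isCompact_singleton
        (by rintro p hp; rw [Set.mem_singleton_iff] at hp; subst hp; exact ha) n
    have hVne : ∀ n, (V n).Nonempty := by
      intro n
      obtain ⟨b, hb, hfb⟩ := h n
      exact ⟨((x, a), b), rfl, hb, hfb.le⟩
    have hVsub : ∀ n, V (n + 1) ⊆ V n := by
      intro n q hq
      exact ⟨hq.1, hq.2.1, le_trans (by exact_mod_cast Nat.le_succ n) hq.2.2⟩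
    obtain ⟨q, hq⟩ := IsCompact.nonempty_iInter_of_sequence_nonempty_isCompact_isClosed
      V hVsub hVne (hVc 0) (fun n => (hVc n).isClosed)
    obtain ⟨n, hn⟩ := exists_nat_gt (f q.1.1 q.1.2 q.2)
    exact absurd ((Set.mem_iInter.1 hq n).2.2) (not_le.2 hn)
  have hne_top : ∀ x a, a ∈ ΦA x →
      (⨆ b ∈ ΦB x a, ((f x a b : ℝ) : EReal)) ≠ ⊤ := by
    intro x a ha
    obtain ⟨M, hM⟩ := hbdd x a ha
    have hle : (⨆ b ∈ ΦB x a, ((f x a b : ℝ) : EReal)) ≤ (M : EReal) :=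
      iSup₂_le fun b hb => EReal.coe_le_coe_iff.2 (hM b hb)
    exact ne_top_of_le_ne_top (EReal.coe_ne_top M) hle
  refine ⟨?_, fun x a ha => hne_top x a ha⟩
  intro x a ha xs as has htend
  by_contra hcon
  push_neg at hcon
  obtain ⟨lam, hlam1, hlam2⟩ := EReal.lt_iff_exists_real_btwn.1 hcon
  have hfreq : ∃ᶠ n in atTop, (lam : EReal) <
      ⨆ b ∈ ΦB (xs n) (as n), ((f (xs n) (as n) b : ℝ) : EReal) := by
    by_contra h
    rw [not_frequently] at h
    have hls : limsup (fun n => ⨆ b ∈ ΦB (xs n) (as n),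
        ((f (xs n) (as n) b : ℝ) : EReal)) atTop ≤ (lam : EReal) :=
      limsup_le_of_le (by isBoundedDefault) (h.mono fun n hn => not_lt.1 hn)
    exact absurd (lt_of_le_of_lt hls hlam2) (lt_irrefl _)
  obtain ⟨φ, hφ, hφP⟩ := Filter.extraction_of_frequently_atTop hfreq
  have hbex : ∀ k, ∃ b, b ∈ ΦB (xs (φ k)) (as (φ k)) ∧
      lam < f (xs (φ k)) (as (φ k)) b := by
    intro k
    have hk := hφP k
    simp only [lt_iSup_iff] at hk
    obtain ⟨b, hb, hlt⟩ := hk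
    exact ⟨b, hb, EReal.coe_lt_coe_iff.1 hlt⟩
  choose bs hbs hbf using hbex
  set C : Set (X × A) := insert (x, a) (Set.range fun n => (xs n, as n)) with hC
  have hCc : IsCompact C := htend.isCompact_insert_range
  have hCsub : C ⊆ {p : X × A | p.2 ∈ ΦA p.1} := by
    rintro p (rfl | ⟨n, rfl⟩)
    · exact ha
    · exact has n
  have hKc := hKsup C ⟨_, Set.mem_insert _ _⟩ hCc hCsub lam
  have hqK : ∀ k, (((xs (φ k), as (φ k)), bs k) : (X × A) × B) ∈
      {q : (X × A) × B | q.1 ∈ C ∧ q.2 ∈ ΦB q.1.1 q.1.2 ∧ lam ≤ f q.1.1 q.1.2 q.2} :=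
    fun k => ⟨Set.mem_insert_of_mem _ ⟨φ k, rfl⟩, hbs k, (hbf k).le⟩
  obtain ⟨p, hpK, ψ, hψ, hψt⟩ := hKc.tendsto_subseq hqK
  have h1 : Tendsto (fun k => ((xs (φ (ψ k)), as (φ (ψ k))) : X × A)) atTop (𝓝 p.1) :=
    (continuous_fst.tendsto p).comp hψt
  have h2 : Tendsto (fun k => ((xs (φ (ψ k)), as (φ (ψ k))) : X × A)) atTop (𝓝 (x, a)) :=
    htend.comp (hφ.comp hψ).tendsto_atTop
  have hp1 : p.1 = (x, a) := tendsto_nhds_unique h1 h2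
  obtain ⟨hpC, hpB, hpf⟩ := hpK
  rw [hp1] at hpB hpf
  have hle : ((f x a p.2 : ℝ) : EReal) ≤ ⨆ b ∈ ΦB x a, ((f x a b : ℝ) : EReal) :=
    le_iSup₂ (f := fun b _ => ((f x a b : ℝ) : EReal)) p.2 hpB
  have hfinal : (lam : EReal) < (lam : EReal) :=
    lt_of_le_of_lt (by exact_mod_cast hpf) (lt_of_le_of_lt hle hlam1)
  exact lt_irrefl _ hfinal
end

section
/- Let X, A, B be metric spaces, Φ_A strict, Φ_B : Gr(Φ_A) → S(B) an A-lower semi-continuous multifunction, and suppose the swapped function f^{A↔B} : Gr(Φ_B^{A↔B}) ⊆ (X × B) × A → ℝ, defined by f^{A↔B}(x,b,a) = f(x,a,b), is K-inf-compact on Gr(Φ_B^{A↔B}). Then the worst-loss function f^♯(x,a) = sup_{b ∈ Φ_B(x,a)} f(x,a,b) is K-inf-compact on Gr(Φ_A). -/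
open Filter Topology

/-- If `Φ_B` is `A`-lower semi-continuous and the swapped function
`f^{A↔B}(x,b,a) = f(x,a,b)` is `K`-inf-compact on `Gr(Φ_B^{A↔B})`, then the
worst-loss function `f♯(x,a) = sup_{b ∈ Φ_B(x,a)} f(x,a,b)` is `K`-inf-compact
on `Gr(Φ_A)`. -/
theorem worstLoss_kInfCompact {X A B : Type*}
    [MetricSpace X] [MetricSpace A] [MetricSpace B]
    (ΦA : X → Set A) (hA : ∀ x, (ΦA x).Nonempty)
    (ΦB : X → A → Set B) (hB : ∀ x, ∀ a ∈ ΦA x, (ΦB x a).Nonempty)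
    (f : X → A → B → ℝ)
    (halsc : ∀ (xs : ℕ → X) (x : X), Tendsto xs atTop (𝓝 x) →
      ∀ as : ℕ → A, (∀ n, as n ∈ ΦA (xs n)) →
      ∀ a ∈ ΦA x, ∀ b ∈ ΦB x a,
      ∃ bs : ℕ → B, (∀ n, bs n ∈ ΦB (xs n) (as n)) ∧
        ∃ φ : ℕ → ℕ, StrictMono φ ∧ Tendsto (fun n => bs (φ n)) atTop (𝓝 b))
    (hKinf : ∀ C : Set (X × B), C.Nonempty → IsCompact C →
      C ⊆ {p : X × B | ∃ a ∈ ΦA p.1, p.2 ∈ ΦB p.1 a} →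
      ∀ lam : ℝ, IsCompact {q : (X × B) × A |
        q.1 ∈ C ∧ q.2 ∈ ΦA q.1.1 ∧ q.1.2 ∈ ΦB q.1.1 q.2 ∧
          f q.1.1 q.2 q.1.2 ≤ lam}) :
    ∀ C : Set X, C.Nonempty → IsCompact C →
    ∀ lam : ℝ, IsCompact {p : X × A | p.1 ∈ C ∧ p.2 ∈ ΦA p.1 ∧
      (⨆ b ∈ ΦB p.1 p.2, ((f p.1 p.2 b : ℝ) : EReal)) ≤ (lam : EReal)} := by
  intro C _hCne hC lam
  have key : ∀ (x : X) (a : A),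
      ((⨆ b ∈ ΦB x a, ((f x a b : ℝ) : EReal)) ≤ (lam : EReal) ↔
        ∀ b ∈ ΦB x a, f x a b ≤ lam) := by
    intro x a
    rw [iSup₂_le_iff]
    constructor
    · intro h b hb; exact_mod_cast h b hb
    · intro h b hb; exact_mod_cast h b hb
  apply IsSeqCompact.isCompact
  intro p hp
  set xs : ℕ → X := fun n => (p n).1 with hxs
  set as : ℕ → A := fun n => (p n).2 with has
  have hxsC : ∀ n, xs n ∈ C := fun n => (hp n).1
  have hasA : ∀ n, as n ∈ ΦA (xs n) := fun n => (hp n).2.1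
  have hf_le : ∀ n, ∀ b ∈ ΦB (xs n) (as n), f (xs n) (as n) b ≤ lam := by
    intro n
    exact (key (xs n) (as n)).1 (hp n).2.2
  -- Step 1: convergent subsequence of xs in C
  obtain ⟨x, hxC, φ1, hφ1, hx1⟩ := hC.tendsto_subseq hxsC
  -- Step 2: use A-lsc with an arbitrary point of the graph over x
  obtain ⟨a₀, ha₀⟩ := hA x
  obtain ⟨b₀, hb₀⟩ := hB x a₀ ha₀
  obtain ⟨bs, hbs, φ2, hφ2, hb2⟩ := halsc (fun n => xs (φ1 n)) x hx1
    (fun n => as (φ1 n)) (fun n => hasA (φ1 n)) a₀ ha₀ b₀ hb₀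
  -- the pair sequence converges
  have hxφ2 : Tendsto (fun n => xs (φ1 (φ2 n))) atTop (𝓝 x) :=
    hx1.comp hφ2.tendsto_atTop
  have hu : Tendsto (fun n => (xs (φ1 (φ2 n)), bs (φ2 n))) atTop (𝓝 (x, b₀)) :=
    hxφ2.prodMk_nhds hb2
  set C' : Set (X × B) := insert (x, b₀)
    (Set.range (fun n => (xs (φ1 (φ2 n)), bs (φ2 n)))) with hC'
  have hC'comp : IsCompact C' := hu.isCompact_insert_range
  have hC'sub : C' ⊆ {q : X × B | ∃ a ∈ ΦA q.1, q.2 ∈ ΦB q.1 a} := by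
    rintro q (rfl | ⟨n, rfl⟩)
    · exact ⟨a₀, ha₀, hb₀⟩
    · exact ⟨as (φ1 (φ2 n)), hasA (φ1 (φ2 n)), hbs (φ2 n)⟩
  have hK := hKinf C' ⟨(x, b₀), Set.mem_insert _ _⟩ hC'comp hC'sub lam
  set q : ℕ → (X × B) × A :=
    fun n => ((xs (φ1 (φ2 n)), bs (φ2 n)), as (φ1 (φ2 n))) with hq
  have hqK : ∀ n, q n ∈ {q : (X × B) × A |
      q.1 ∈ C' ∧ q.2 ∈ ΦA q.1.1 ∧ q.1.2 ∈ ΦB q.1.1 q.2 ∧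
        f q.1.1 q.2 q.1.2 ≤ lam} := by
    intro n
    refine ⟨Set.mem_insert_of_mem _ ⟨n, rfl⟩, hasA _, hbs _, ?_⟩
    exact hf_le _ _ (hbs (φ2 n))
  obtain ⟨r, hrK, φ3, hφ3, hr⟩ := hK.tendsto_subseq hqK
  -- identify the limit's first coordinate
  have hx3 : Tendsto (fun n => xs (φ1 (φ2 (φ3 n)))) atTop (𝓝 x) :=
    hxφ2.comp hφ3.tendsto_atTop
  have hx3' : Tendsto (fun n => xs (φ1 (φ2 (φ3 n)))) atTop (𝓝 r.1.1) := by
    have := ((continuous_fst.comp continuous_fst).tendsto r).comp hr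
    exact this
  have hxeq : r.1.1 = x := tendsto_nhds_unique hx3' hx3
  have ha3 : Tendsto (fun n => as (φ1 (φ2 (φ3 n)))) atTop (𝓝 r.2) :=
    (continuous_snd.tendsto r).comp hr
  have haA : r.2 ∈ ΦA x := hxeq ▸ hrK.2.1
  -- final: sup over ΦB x r.2 is ≤ lam
  have hsup : ∀ b ∈ ΦB x r.2, f x r.2 b ≤ lam := by
    intro b hb
    obtain ⟨bs', hbs', φ4, hφ4, hb4⟩ := halsc (fun n => xs (φ1 (φ2 (φ3 n)))) x hx3
      (fun n => as (φ1 (φ2 (φ3 n)))) (fun n => hasA _) r.2 haA b hb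
    have hx4 : Tendsto (fun n => xs (φ1 (φ2 (φ3 (φ4 n))))) atTop (𝓝 x) :=
      hx3.comp hφ4.tendsto_atTop
    have ha4 : Tendsto (fun n => as (φ1 (φ2 (φ3 (φ4 n))))) atTop (𝓝 r.2) :=
      ha3.comp hφ4.tendsto_atTop
    have hu' : Tendsto (fun n => (xs (φ1 (φ2 (φ3 (φ4 n)))), bs' (φ4 n)))
        atTop (𝓝 (x, b)) := hx4.prodMk_nhds hb4
    set C'' : Set (X × B) := insert (x, b)
      (Set.range (fun n => (xs (φ1 (φ2 (φ3 (φ4 n)))), bs' (φ4 n)))) with hC''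
    have hC''comp : IsCompact C'' := hu'.isCompact_insert_range
    have hC''sub : C'' ⊆ {q : X × B | ∃ a ∈ ΦA q.1, q.2 ∈ ΦB q.1 a} := by
      rintro w (rfl | ⟨n, rfl⟩)
      · exact ⟨r.2, haA, hb⟩
      · exact ⟨as (φ1 (φ2 (φ3 (φ4 n)))), hasA _, hbs' (φ4 n)⟩
    have hK'' := hKinf C'' ⟨(x, b), Set.mem_insert _ _⟩ hC''comp hC''sub lam
    set q' : ℕ → (X × B) × A :=
      fun n => ((xs (φ1 (φ2 (φ3 (φ4 n)))), bs' (φ4 n)), as (φ1 (φ2 (φ3 (φ4 n))))) with hq'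
    have hq'K : ∀ n, q' n ∈ {w : (X × B) × A |
        w.1 ∈ C'' ∧ w.2 ∈ ΦA w.1.1 ∧ w.1.2 ∈ ΦB w.1.1 w.2 ∧
          f w.1.1 w.2 w.1.2 ≤ lam} := by
      intro n
      refine ⟨Set.mem_insert_of_mem _ ⟨n, rfl⟩, hasA _, hbs' _, ?_⟩
      exact hf_le _ _ (hbs' (φ4 n))
    have hq'lim : Tendsto q' atTop (𝓝 ((x, b), r.2)) := hu'.prodMk_nhds ha4
    have hmem : ((x, b), r.2) ∈ {w : (X × B) × A |
        w.1 ∈ C'' ∧ w.2 ∈ ΦA w.1.1 ∧ w.1.2 ∈ ΦB w.1.1 w.2 ∧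
          f w.1.1 w.2 w.1.2 ≤ lam} :=
      hK''.isClosed.mem_of_tendsto hq'lim (Eventually.of_forall hq'K)
    exact hmem.2.2.2
  refine ⟨(x, r.2), ⟨hxC, haA, (key x r.2).2 hsup⟩, φ1 ∘ φ2 ∘ φ3, ?_, ?_⟩
  · exact hφ1.comp (hφ2.comp hφ3)
  · have : Tendsto (fun n => (xs (φ1 (φ2 (φ3 n))), as (φ1 (φ2 (φ3 n)))))
        atTop (𝓝 (x, r.2)) := hx3.prodMk_nhds ha3
    exact this
end

section
/- Under the assumptions of the previous statement (Φ_B A-lower semi-continuous and f^{A↔B} K-inf-compact on Gr(Φ_B^{A↔B})), the minimax function v^♯(x) = inf_{a ∈ Φ_A(x)} sup_{b ∈ Φ_B(x,a)} f(x,a,b) is lower semi-continuous on X. -/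
open Filter Topology

/-- Key extraction lemma: from a sequence of approximate minimizers with sublevel
bound, extract a convergent subsequence whose limit keeps the bound. -/
lemma minimax_key {X A B : Type*}
    [MetricSpace X] [MetricSpace A] [MetricSpace B]
    (ΦA : X → Set A)
    (ΦB : X → A → Set B)
    (f : X → A → B → ℝ)
    (halsc : ∀ (xs : ℕ → X) (x : X), Tendsto xs atTop (𝓝 x) →
      ∀ as : ℕ → A, (∀ n, as n ∈ ΦA (xs n)) →
      ∀ a ∈ ΦA x, ∀ b ∈ ΦB x a,
      ∃ bs : ℕ → B, (∀ n, bs n ∈ ΦB (xs n) (as n)) ∧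
        ∃ φ : ℕ → ℕ, StrictMono φ ∧ Tendsto (fun n => bs (φ n)) atTop (𝓝 b))
    (hKinf : ∀ C : Set (X × B), C.Nonempty → IsCompact C →
      C ⊆ {p : X × B | ∃ a ∈ ΦA p.1, p.2 ∈ ΦB p.1 a} →
      ∀ lam : ℝ, IsCompact {q : (X × B) × A |
        q.1 ∈ C ∧ q.2 ∈ ΦA q.1.1 ∧ q.1.2 ∈ ΦB q.1.1 q.2 ∧
          f q.1.1 q.2 q.1.2 ≤ lam})
    (x : X) (ys : ℕ → X) (hy : Tendsto ys atTop (𝓝 x))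
    (as : ℕ → A) (has : ∀ n, as n ∈ ΦA (ys n))
    (lam : ℝ) (hf : ∀ n, ∀ b ∈ ΦB (ys n) (as n), f (ys n) (as n) b ≤ lam)
    (a : A) (ha : a ∈ ΦA x) (b : B) (hb : b ∈ ΦB x a) :
    ∃ a', a' ∈ ΦA x ∧ b ∈ ΦB x a' ∧ f x a' b ≤ lam ∧
      ∃ φ : ℕ → ℕ, StrictMono φ ∧ Tendsto (fun n => as (φ n)) atTop (𝓝 a') := by
  obtain ⟨bs, hbs, φ, hφ, hconv⟩ := halsc ys x hy as has a ha b hb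
  set g : ℕ → X × B := fun n => (ys (φ n), bs (φ n)) with hg
  have hgtends : Tendsto g atTop (𝓝 (x, b)) := by
    rw [nhds_prod_eq]
    exact (hy.comp hφ.tendsto_atTop).prodMk hconv
  set C : Set (X × B) := insert (x, b) (Set.range g) with hC
  have hCcomp : IsCompact C := hgtends.isCompact_insert_range
  have hCne : C.Nonempty := ⟨(x, b), Set.mem_insert _ _⟩
  have hCsub : C ⊆ {p : X × B | ∃ a ∈ ΦA p.1, p.2 ∈ ΦB p.1 a} := by
    rintro p (rfl | ⟨n, rfl⟩)
    · exact ⟨a, ha, hb⟩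
    · exact ⟨as (φ n), has (φ n), hbs (φ n)⟩
  have hK := hKinf C hCne hCcomp hCsub lam
  set q : ℕ → (X × B) × A := fun n => (g n, as (φ n)) with hq
  have hqmem : ∀ n, q n ∈ {q : (X × B) × A |
      q.1 ∈ C ∧ q.2 ∈ ΦA q.1.1 ∧ q.1.2 ∈ ΦB q.1.1 q.2 ∧ f q.1.1 q.2 q.1.2 ≤ lam} := by
    intro n
    refine ⟨Set.mem_insert_of_mem _ ⟨n, rfl⟩, has (φ n), hbs (φ n), hf (φ n) _ (hbs (φ n))⟩
  obtain ⟨q₀, hq₀, ψ, hψ, hqconv⟩ := hK.tendsto_subseq hqmem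
  have h1 : Tendsto (fun n => (q (ψ n)).1) atTop (𝓝 q₀.1) :=
    (continuous_fst.continuousAt.tendsto.comp hqconv)
  have h2 : Tendsto (fun n => (q (ψ n)).2) atTop (𝓝 q₀.2) :=
    (continuous_snd.continuousAt.tendsto.comp hqconv)
  have h1' : Tendsto (fun n => (q (ψ n)).1) atTop (𝓝 (x, b)) :=
    hgtends.comp (hψ.tendsto_atTop)
  have hfst : q₀.1 = (x, b) := tendsto_nhds_unique h1 h1'
  obtain ⟨hC₀, hΦA₀, hΦB₀, hf₀⟩ := hq₀
  rw [hfst] at hΦA₀ hΦB₀ hf₀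
  refine ⟨q₀.2, hΦA₀, hΦB₀, hf₀, φ ∘ ψ, hφ.comp hψ, ?_⟩
  exact h2

/-- If `Φ_B` is `A`-lower semi-continuous and the swapped function
`f^{A↔B}(x,b,a) = f(x,a,b)` is `K`-inf-compact on `Gr(Φ_B^{A↔B})`, then the
minimax function `v♯(x) = inf_{a ∈ Φ_A(x)} sup_{b ∈ Φ_B(x,a)} f(x,a,b)` is lower
semi-continuous on `X`. -/
theorem minimax_lsc {X A B : Type*}
    [MetricSpace X] [MetricSpace A] [MetricSpace B]
    (ΦA : X → Set A) (hA : ∀ x, (ΦA x).Nonempty)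
    (ΦB : X → A → Set B) (hB : ∀ x, ∀ a ∈ ΦA x, (ΦB x a).Nonempty)
    (f : X → A → B → ℝ)
    (halsc : ∀ (xs : ℕ → X) (x : X), Tendsto xs atTop (𝓝 x) →
      ∀ as : ℕ → A, (∀ n, as n ∈ ΦA (xs n)) →
      ∀ a ∈ ΦA x, ∀ b ∈ ΦB x a,
      ∃ bs : ℕ → B, (∀ n, bs n ∈ ΦB (xs n) (as n)) ∧
        ∃ φ : ℕ → ℕ, StrictMono φ ∧ Tendsto (fun n => bs (φ n)) atTop (𝓝 b))
    (hKinf : ∀ C : Set (X × B), C.Nonempty → IsCompact C →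
      C ⊆ {p : X × B | ∃ a ∈ ΦA p.1, p.2 ∈ ΦB p.1 a} →
      ∀ lam : ℝ, IsCompact {q : (X × B) × A |
        q.1 ∈ C ∧ q.2 ∈ ΦA q.1.1 ∧ q.1.2 ∈ ΦB q.1.1 q.2 ∧
          f q.1.1 q.2 q.1.2 ≤ lam}) :
    ∀ (x : X) (xs : ℕ → X), Tendsto xs atTop (𝓝 x) →
    (⨅ a ∈ ΦA x, ⨆ b ∈ ΦB x a, ((f x a b : ℝ) : EReal)) ≤
      liminf (fun n => ⨅ a ∈ ΦA (xs n), ⨆ b ∈ ΦB (xs n) a,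
        ((f (xs n) a b : ℝ) : EReal)) atTop := by
  intro x xs hx
  set v : X → EReal := fun y => ⨅ a ∈ ΦA y, ⨆ b ∈ ΦB y a, ((f y a b : ℝ) : EReal) with hv
  set L : EReal := liminf (fun n => v (xs n)) atTop with hL
  -- it suffices to show v x ≤ lam for every real lam > L
  suffices h : ∀ lam : ℝ, L < (lam : EReal) → v x ≤ (lam : EReal) by
    by_contra hcon
    push_neg at hcon
    obtain ⟨lam, hL1, hL2⟩ := EReal.exists_between_coe_real hcon
    exact absurd (h lam hL1) (not_le.mpr hL2)
  intro lam hlt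
  -- frequently v (xs n) < lam; extract a subsequence
  have hfreq : ∃ᶠ n in atTop, v (xs n) < (lam : EReal) :=
    frequently_lt_of_liminf_lt (by isBoundedDefault) hlt
  obtain ⟨ψ0, hψ0, hψ0v⟩ := extraction_of_frequently_atTop hfreq
  -- pick approximate minimizers
  have hchoose : ∀ n, ∃ a ∈ ΦA (xs (ψ0 n)),
      (⨆ b ∈ ΦB (xs (ψ0 n)) a, ((f (xs (ψ0 n)) a b : ℝ) : EReal)) < (lam : EReal) := by
    intro n
    have := hψ0v n
    rw [hv] at this
    simpa using (by simpa [iInf_lt_iff] using this :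
      ∃ a, ∃ _ : a ∈ ΦA (xs (ψ0 n)),
        (⨆ b ∈ ΦB (xs (ψ0 n)) a, ((f (xs (ψ0 n)) a b : ℝ) : EReal)) < (lam : EReal))
  choose as has hsup using hchoose
  set ys : ℕ → X := fun n => xs (ψ0 n) with hys
  have hy : Tendsto ys atTop (𝓝 x) := hx.comp hψ0.tendsto_atTop
  have hfle : ∀ n, ∀ b ∈ ΦB (ys n) (as n), f (ys n) (as n) b ≤ lam := by
    intro n b hb
    have h1 : ((f (ys n) (as n) b : ℝ) : EReal) ≤ (lam : EReal) := by
      refine le_of_lt (lt_of_le_of_lt ?_ (hsup n))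
      exact le_iSup₂_of_le b hb le_rfl
    exact_mod_cast h1
  -- first application: get a limit point a* ∈ ΦA x
  obtain ⟨a0, ha0⟩ := hA x
  obtain ⟨b0, hb0⟩ := hB x a0 ha0
  obtain ⟨a', ha', _, _, φ1, hφ1, hconv1⟩ :=
    minimax_key ΦA ΦB f halsc hKinf x ys hy as has lam hfle a0 ha0 b0 hb0
  -- second: for every b ∈ ΦB x a', f x a' b ≤ lam
  have hkey2 : ∀ b ∈ ΦB x a', f x a' b ≤ lam := by
    intro b hb
    obtain ⟨a'', ha'', hb'', hf'', φ2, hφ2, hconv2⟩ :=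
      minimax_key ΦA ΦB f halsc hKinf x (fun n => ys (φ1 n))
        (hy.comp hφ1.tendsto_atTop) (fun n => as (φ1 n)) (fun n => has (φ1 n))
        lam (fun n => hfle (φ1 n)) a' ha' b hb
    have : Tendsto (fun n => as (φ1 (φ2 n))) atTop (𝓝 a') :=
      hconv1.comp hφ2.tendsto_atTop
    have heq : a'' = a' := tendsto_nhds_unique hconv2 this
    rwa [heq] at hf''
  -- conclude
  calc v x ≤ ⨆ b ∈ ΦB x a', ((f x a' b : ℝ) : EReal) := iInf₂_le a' ha'
    _ ≤ (lam : EReal) := by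
        refine iSup₂_le fun b hb => ?_
        exact_mod_cast hkey2 b hb
end

section
/- Let X = ℝ, A = B = [0,∞), Φ_A(x) = [0,∞), and φ_B(x,a) defined by: φ_B(x,a) = 0 if x ≤ 0 or (x > 0 and 0 ≤ a < 1/(2x)); φ_B(x,a) = 2(2x+1)a − 2 − 1/x if x > 0 and 1/(2x) ≤ a ≤ 1/x; φ_B(x,a) = 2 + 1/x if x > 0 and a > 1/x. Then φ_B : ℝ × [0,∞) → ℝ is continuous. -/
open Filter Topology

noncomputable def phiB (x a : ℝ) : ℝ :=
  if x ≤ 0 then 0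
  else if a < 1 / (2 * x) then 0
  else if a ≤ 1 / x then 2 * (2 * x + 1) * a - 2 - 1 / x
  else 2 + 1 / x

lemma phiB_eq_clamp {x : ℝ} (hx : 0 < x) (a : ℝ) :
    phiB x a = max 0 (min (2 * (2 * x + 1) * a - 2 - 1 / x) (2 + 1 / x)) := by
  have hx' : x ≠ 0 := ne_of_gt hx
  have h2x : (0:ℝ) < 2 * x := by linarith
  have hxi : x * (1 / x) = 1 := by field_simp
  have hinv : (0:ℝ) < 1 / x := by positivity
  unfold phiB
  rw [if_neg (not_le.2 hx)]
  split_ifs with h1 h2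
  · -- a < 1/(2x), so f ≤ 0
    have hxa : 2 * x * a < 1 := by
      rw [lt_div_iff₀ h2x] at h1; linarith
    have hf : 2 * (2 * x + 1) * a - 2 - 1 / x ≤ 0 := by
      nlinarith [mul_pos hx hx]
    rw [max_eq_left (le_trans (min_le_left _ _) hf)]
  · -- 1/(2x) ≤ a ≤ 1/x
    have hxa : 1 ≤ 2 * x * a := by
      rw [not_lt, div_le_iff₀ h2x] at h1; linarith
    have hxb : x * a ≤ 1 := by
      rw [le_div_iff₀ hx] at h2; linarith
    have h0f : 0 ≤ 2 * (2 * x + 1) * a - 2 - 1 / x := by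
      nlinarith [mul_pos hx hx]
    have hfc : 2 * (2 * x + 1) * a - 2 - 1 / x ≤ 2 + 1 / x := by
      nlinarith [mul_pos hx hx]
    rw [min_eq_left hfc, max_eq_right h0f]
  · -- a > 1/x
    have hxb : 1 < x * a := by
      rw [not_le, div_lt_iff₀ hx] at h2; linarith
    have hcf : 2 + 1 / x ≤ 2 * (2 * x + 1) * a - 2 - 1 / x := by
      nlinarith [mul_pos hx hx]
    rw [min_eq_right hcf, max_eq_right (by positivity)]

/-- The function `φ_B` from the example is continuous on `ℝ × [0, ∞)`. -/
theorem phiB_continuous :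
    ContinuousOn (fun p : ℝ × ℝ => phiB p.1 p.2)
      (Set.univ ×ˢ Set.Ici (0 : ℝ)) := by
  intro p hp
  have hp2 : (0:ℝ) ≤ p.2 := hp.2
  rcases le_or_gt p.1 0 with hx | hx
  · -- x ≤ 0 : function is eventually 0
    have hval : phiB p.1 p.2 = 0 := by unfold phiB; rw [if_pos hx]
    rw [ContinuousWithinAt, hval]
    have hδ : (0:ℝ) < 1 / (2 * (p.2 + 1)) := by positivity
    have hU : {q : ℝ × ℝ | q.1 < 1 / (2 * (p.2 + 1)) ∧ q.2 < p.2 + 1} ∈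
        𝓝[Set.univ ×ˢ Set.Ici (0:ℝ)] p := by
      apply mem_nhdsWithin_of_mem_nhds
      apply IsOpen.mem_nhds
      · exact (isOpen_lt continuous_fst continuous_const).inter
          (isOpen_lt continuous_snd continuous_const)
      · exact ⟨by linarith, by linarith⟩
    apply Filter.Tendsto.congr' _ tendsto_const_nhds
    filter_upwards [hU] with q hq
    rcases le_or_gt q.1 0 with h | h
    · simp [phiB, h]
    · have hq1 : q.1 * (2 * (p.2 + 1)) < 1 := by
        rw [lt_div_iff₀ (by positivity)] at hq
        exact hq.1
      have hlt : q.2 < 1 / (2 * q.1) := by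
        rw [lt_div_iff₀ (by linarith)]
        nlinarith [hq.2]
      symm
      unfold phiB
      rw [if_neg (not_le.2 h), if_pos hlt]
  · -- x > 0 : equal to a continuous clamp near p
    apply ContinuousAt.continuousWithinAt
    have h1 : ContinuousAt (fun q : ℝ × ℝ => 1 / q.1) p :=
      ContinuousAt.div continuousAt_const continuousAt_fst (ne_of_gt hx)
    have hg : ContinuousAt
        (fun q : ℝ × ℝ => max 0 (min (2 * (2 * q.1 + 1) * q.2 - 2 - 1 / q.1) (2 + 1 / q.1))) p := by
      exact continuousAt_const.max
        (((((continuousAt_const.mul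
          ((continuousAt_const.mul continuousAt_fst).add continuousAt_const)).mul
          continuousAt_snd).sub continuousAt_const).sub h1).min
          (continuousAt_const.add h1))
    apply hg.congr
    filter_upwards [IsOpen.mem_nhds (isOpen_lt continuous_const continuous_fst) hx] with q hq
    exact (phiB_eq_clamp hq q.2).symm
end

section
/- With X = ℝ, A = B = [0,∞), Φ_A(x) = [0,∞), and Φ_B(x,a) = [φ_B(x,a), ∞) where φ_B is as above, the multifunction Φ_B is lower semi-continuous on Gr(Φ_A) = ℝ × [0,∞) (in the sequential sense: for every (x_n,a_n) → (x,a) in ℝ × [0,∞) and b ∈ Φ_B(x,a), there are b_n ∈ Φ_B(x_n,a_n) with b_n → b). -/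
open Filter Topology

/-! `phiB` is in fact continuous on all of `ℝ × ℝ`: it vanishes on the open set
`{x < 0} ∪ {2 * x * a < 1}`, which contains every point with `x ≤ 0`, and for `x > 0` it is an
affine function of `a` clamped to `[0, 2 + 1 / x]`. Hence `phiB (xs n) (as n) → phiB x a ≤ b`,
and `bs n = max (phiB (xs n) (as n)) b` works. -/

theorem exists_tendsto_of_tendsto_of_le {ι α : Type*} [LinearOrder α] [TopologicalSpace α]
    [OrderClosedTopology α] {l : Filter ι} {u : ι → α} {c b : α}
    (hu : Tendsto u l (𝓝 c)) (hcb : c ≤ b) :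
    ∃ v : ι → α, (∀ i, u i ≤ v i) ∧ Tendsto v l (𝓝 b) :=
  ⟨fun i => max (u i) b, fun _ => le_max_left _ _, by
    simpa [max_eq_right hcb] using hu.max (tendsto_const_nhds (x := b))⟩

theorem phiB_eq_zero {x a : ℝ} (h : x < 0 ∨ 2 * x * a < 1) : phiB x a = 0 := by
  unfold phiB
  split_ifs with h₀ h₁ <;> try rfl
  all_goals
    rw [not_le] at h₀
    rw [not_lt, div_le_iff₀ (by positivity)] at h₁
    rcases h with h | h <;> linarith

theorem phiB_eq_min_max {x : ℝ} (hx : 0 < x) (a : ℝ) :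
    phiB x a = min (max (2 * (2 * x + 1) * a - 2 - 1 / x) 0) (2 + 1 / x) := by
  -- the middle branch interpolates affinely between 0 at a = 1/(2x) and 2 + 1/x at a = 1/x
  have hlow : 2 * (2 * x + 1) * a - 2 - 1 / x = 2 * (2 * x + 1) * (a - 1 / (2 * x)) := by
    field_simp; ring
  have hupp : 2 * (2 * x + 1) * a - 2 - 1 / x - (2 + 1 / x) = 2 * (2 * x + 1) * (a - 1 / x) := by
    field_simp; ring
  have hslope : 0 < 2 * (2 * x + 1) := by positivity
  have hcap : 0 ≤ 2 + 1 / x := by positivity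
  unfold phiB
  rw [if_neg hx.not_ge]
  split_ifs with h₁ h₂
  · have : 2 * (2 * x + 1) * a - 2 - 1 / x ≤ 0 := by
      rw [hlow]; exact mul_nonpos_of_nonneg_of_nonpos hslope.le (by linarith)
    rw [max_eq_right this, min_eq_left hcap]
  · have h0 : 0 ≤ 2 * (2 * x + 1) * a - 2 - 1 / x := by
      rw [hlow]; exact mul_nonneg hslope.le (by linarith)
    have h1 : 2 * (2 * x + 1) * a - 2 - 1 / x ≤ 2 + 1 / x := by
      have := mul_nonpos_of_nonneg_of_nonpos hslope.le (sub_nonpos.2 h₂)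
      linarith
    rw [max_eq_left h0, min_eq_left h1]
  · have h1 : 2 + 1 / x ≤ 2 * (2 * x + 1) * a - 2 - 1 / x := by
      have := mul_pos hslope (sub_pos.2 (not_le.1 h₂))
      linarith
    rw [min_eq_right (le_max_of_le_left h1)]

theorem continuous_phiB : Continuous (Function.uncurry phiB) := by
  refine continuous_iff_continuousAt.2 fun ⟨x, a⟩ => ?_
  rcases le_or_gt x 0 with hx | hx
  · have hU : {p : ℝ × ℝ | p.1 < 0} ∪ {p | 2 * p.1 * p.2 < 1} ∈ 𝓝 (x, a) := by
      refine IsOpen.mem_nhds ((isOpen_lt (by fun_prop) (by fun_prop)).union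
        (isOpen_lt (by fun_prop) (by fun_prop))) ?_
      rcases hx.lt_or_eq with hx | rfl
      · exact Or.inl hx
      · exact Or.inr (by simp)
    refine (continuousAt_const (y := (0 : ℝ))).congr (eventually_of_mem hU fun p hp => ?_)
    exact (phiB_eq_zero hp).symm
  · have hU : {p : ℝ × ℝ | 0 < p.1} ∈ 𝓝 (x, a) :=
      IsOpen.mem_nhds (isOpen_lt (by fun_prop) (by fun_prop)) hx
    have hcont : ContinuousAt (fun p : ℝ × ℝ =>
        min (max (2 * (2 * p.1 + 1) * p.2 - 2 - 1 / p.1) 0) (2 + 1 / p.1)) (x, a) := by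
      fun_prop (disch := exact hx.ne')
    refine hcont.congr (eventually_of_mem hU fun p hp => ?_)
    exact (phiB_eq_min_max hp p.2).symm

/-- The multifunction `Φ_B(x,a) = [φ_B(x,a), ∞)` of the example is lower
semi-continuous on `Gr(Φ_A) = ℝ × [0, ∞)` (sequential sense). -/
theorem phiB_multifunction_lsc :
    ∀ (x a : ℝ), 0 ≤ a →
    ∀ (xs as : ℕ → ℝ), (∀ n, 0 ≤ as n) →
    Tendsto (fun n => ((xs n, as n) : ℝ × ℝ)) atTop (𝓝 (x, a)) →
    ∀ b ∈ Set.Ici (phiB x a),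
    ∃ bs : ℕ → ℝ, (∀ n, bs n ∈ Set.Ici (phiB (xs n) (as n))) ∧
      Tendsto bs atTop (𝓝 b) := by
  intro x a _ xs as _ htend b hb
  exact exists_tendsto_of_tendsto_of_le ((continuous_phiB.tendsto (x, a)).comp htend) hb
end

section
/- With the same Φ_A, Φ_B (Φ_B(x,a) = [φ_B(x,a), ∞)), the multifunction Φ_B is not A-lower semi-continuous: taking x = a = b = 0, x_n = 1/n → 0, a_n = n ∈ Φ_A(x_n), one has Φ_B(x_n, a_n) ∩ (−1, 1) = ∅ for all n ≥ 1, so no sequence b_n ∈ Φ_B(x_n, a_n) has 0 as a limit point. -/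
open Filter Topology

lemma phiB_val (r : ℝ) (hr : 1 ≤ r) : phiB (1 / r) r = r + 2 := by
  have h0 : (0:ℝ) < r := lt_of_lt_of_le one_pos hr
  have hx : (0:ℝ) < 1 / r := by positivity
  have h1 : 1 / (1 / r) = r := one_div_one_div r
  have h2 : 1 / (2 * (1 / r)) = r / 2 := by
    rw [mul_one_div, one_div_div]
  unfold phiB
  rw [if_neg (not_le.mpr hx), h2, if_neg (not_lt.mpr (by linarith)), h1,
    if_pos le_rfl]
  field_simp
  ring

/-- The multifunction `Φ_B(x,a) = [φ_B(x,a), ∞)` is not `A`-lower semi-continuous: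
along `x_n = 1/n → 0`, `a_n = n ∈ Φ_A(x_n)`, the sets `Φ_B(x_n, a_n)` miss `(-1,1)`,
so no choice `b_n ∈ Φ_B(x_n, a_n)` has `b = 0 ∈ Φ_B(0,0)` as a limit point. -/
theorem phiB_not_alsc :
    (∀ n : ℕ, 1 ≤ n →
      Set.Ici (phiB (1 / (n : ℝ)) (n : ℝ)) ∩ Set.Ioo (-1 : ℝ) 1 = ∅) ∧
    ¬ ∃ bs : ℕ → ℝ,
        (∀ n : ℕ, bs n ∈ Set.Ici (phiB (1 / ((n : ℝ) + 1)) ((n : ℝ) + 1))) ∧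
        ∃ φ : ℕ → ℕ, StrictMono φ ∧
          Tendsto (fun n => bs (φ n)) atTop (𝓝 (0 : ℝ)) := by
  constructor
  · intro n hn
    have hr : (1:ℝ) ≤ n := by exact_mod_cast hn
    rw [phiB_val _ hr]
    ext b
    simp only [Set.mem_inter_iff, Set.mem_Ici, Set.mem_Ioo, Set.mem_empty_iff_false,
      iff_false, not_and]
    intro hb h1 h2
    linarith
  · rintro ⟨bs, hbs, φ, hφ, htend⟩
    have hge : ∀ n, (3:ℝ) ≤ bs (φ n) := by
      intro n
      have hr : (1:ℝ) ≤ (φ n : ℝ) + 1 := by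
        have := Nat.cast_nonneg (α := ℝ) (φ n); linarith
      have := hbs (φ n)
      rw [Set.mem_Ici, phiB_val _ hr] at this
      have : ((φ n : ℝ) + 1) + 2 ≤ bs (φ n) := this
      have h0 : (0:ℝ) ≤ (φ n : ℝ) := Nat.cast_nonneg _
      linarith
    have := le_of_tendsto_of_tendsto tendsto_const_nhds htend
      (Eventually.of_forall hge)
    linarith
end

section
/- Berge's theorem for possibly noncompact decision sets: let X, Y be metric spaces, Φ : X → 2^Y with Dom Φ ≠ ∅, and u : Gr(Φ) → ℝ̄ K-inf-compact on Gr(Φ). Then the value function v(x) := inf_{y ∈ Φ(x)} u(x,y) is lower semi-continuous on Dom Φ; moreover for each x ∈ Dom Φ, if v(x) < +∞ then the solution set Φ*(x) := {y ∈ Φ(x) : u(x,y) = v(x)} is nonempty and compact, and if v(x) = +∞ then Φ*(x) = Φ(x). -/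
open Filter Topology

private lemma slice_compact {X Y : Type*} [MetricSpace X] [MetricSpace Y]
    (Φ : X → Set Y) (u : X → Y → EReal)
    (hK : ∀ C : Set X, C.Nonempty → IsCompact C → C ⊆ {x | (Φ x).Nonempty} →
      ∀ lam : ℝ,
        IsCompact {p : X × Y | p.1 ∈ C ∧ p.2 ∈ Φ p.1 ∧ u p.1 p.2 ≤ (lam : EReal)})
    (x : X) (hx : (Φ x).Nonempty) (lam : ℝ) :
    IsCompact {y | y ∈ Φ x ∧ u x y ≤ (lam : EReal)} := by
  have h := hK {x} ⟨x, rfl⟩ isCompact_singleton (by simpa using hx) lam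
  have himg := h.image continuous_snd
  convert himg using 1
  ext y
  constructor
  · rintro ⟨h1, h2⟩
    exact ⟨(x, y), ⟨rfl, h1, h2⟩, rfl⟩
  · rintro ⟨⟨a, b⟩, ⟨ha, hb, hab⟩, rfl⟩
    simp only [Set.mem_singleton_iff] at ha
    subst ha
    exact ⟨hb, hab⟩

/-- Berge's theorem for possibly noncompact decision sets: if `u` is
`K`-inf-compact on `Gr(Φ)`, then the value function `v(x) = inf_{y ∈ Φ(x)} u(x,y)`
is lower semi-continuous on `Dom Φ`; moreover, for `x ∈ Dom Φ`, if `v(x) < +∞`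
then the solution set `Φ*(x)` is nonempty and compact, and if `v(x) = +∞` then
`Φ*(x) = Φ(x)`. -/
theorem berge_noncompact {X Y : Type*} [MetricSpace X] [MetricSpace Y]
    (Φ : X → Set Y) (hdom : {x | (Φ x).Nonempty}.Nonempty)
    (u : X → Y → EReal)
    (hK : ∀ C : Set X, C.Nonempty → IsCompact C → C ⊆ {x | (Φ x).Nonempty} →
      ∀ lam : ℝ,
        IsCompact {p : X × Y | p.1 ∈ C ∧ p.2 ∈ Φ p.1 ∧ u p.1 p.2 ≤ (lam : EReal)}) :
    (∀ x : X, (Φ x).Nonempty → ∀ xs : ℕ → X, (∀ n, (Φ (xs n)).Nonempty) →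
      Tendsto xs atTop (𝓝 x) →
      (⨅ y ∈ Φ x, u x y) ≤ liminf (fun n => ⨅ y ∈ Φ (xs n), u (xs n) y) atTop) ∧
    (∀ x : X, (Φ x).Nonempty →
      ((⨅ y ∈ Φ x, u x y) < ⊤ →
        ({y ∈ Φ x | u x y = ⨅ y' ∈ Φ x, u x y'}.Nonempty ∧
          IsCompact {y ∈ Φ x | u x y = ⨅ y' ∈ Φ x, u x y'})) ∧
      ((⨅ y ∈ Φ x, u x y) = ⊤ →
        {y ∈ Φ x | u x y = ⨅ y' ∈ Φ x, u x y'} = Φ x)) := by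
  constructor
  · -- lower semicontinuity along sequences
    intro x hx xs hxs hconv
    by_contra hlt
    push_neg at hlt
    obtain ⟨lam, hlam1, hlam2⟩ := EReal.exists_between_coe_real hlt
    have hfreq : ∃ᶠ n in atTop, (⨅ y ∈ Φ (xs n), u (xs n) y) < (lam : EReal) :=
      frequently_lt_of_liminf_lt (by isBoundedDefault) hlam1
    obtain ⟨φ, hφ, hφP⟩ := extraction_of_frequently_atTop hfreq
    have hy : ∀ k, ∃ y ∈ Φ (xs (φ k)), u (xs (φ k)) y < (lam : EReal) := by
      intro k
      have := hφP k
      rw [iInf_lt_iff] at this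
      obtain ⟨y, hy⟩ := this
      rw [iInf_lt_iff] at hy
      obtain ⟨hyΦ, hyu⟩ := hy
      exact ⟨y, hyΦ, hyu⟩
    choose y hy1 hy2 using hy
    set C : Set X := insert x (Set.range xs) with hC
    have hCcomp : IsCompact C := hconv.isCompact_insert_range
    have hCdom : C ⊆ {x | (Φ x).Nonempty} := by
      rintro z (rfl | ⟨n, rfl⟩)
      · exact hx
      · exact hxs n
    have hS := hK C ⟨x, Set.mem_insert _ _⟩ hCcomp hCdom lam
    set p : ℕ → X × Y := fun k => (xs (φ k), y k) with hp
    have hpS : ∀ k, p k ∈ {p : X × Y | p.1 ∈ C ∧ p.2 ∈ Φ p.1 ∧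
        u p.1 p.2 ≤ (lam : EReal)} := fun k =>
      ⟨Set.mem_insert_of_mem _ ⟨φ k, rfl⟩, hy1 k, (hy2 k).le⟩
    obtain ⟨q, hqS, ψ, hψ, htend⟩ := hS.tendsto_subseq hpS
    have h1 : Tendsto (fun j => (p (ψ j)).1) atTop (𝓝 q.1) :=
      (continuous_fst.tendsto q).comp htend
    have h2 : Tendsto (fun j => xs (φ (ψ j))) atTop (𝓝 x) :=
      hconv.comp ((hφ.comp hψ).tendsto_atTop)
    have hq1 : q.1 = x := tendsto_nhds_unique h1 h2
    obtain ⟨-, hqΦ, hqu⟩ := hqS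
    rw [hq1] at hqΦ hqu
    have : (⨅ y ∈ Φ x, u x y) ≤ u x q.2 := iInf₂_le q.2 hqΦ
    exact absurd (this.trans hqu) (not_le.mpr hlam2)
  · intro x hx
    set v : EReal := ⨅ y ∈ Φ x, u x y with hv
    constructor
    · intro hvtop
      -- index type: reals strictly above v
      set ι := {r : ℝ // v < (r : EReal)} with hι
      have : Nonempty ι := by
        obtain ⟨r, hr, -⟩ := EReal.exists_between_coe_real hvtop
        exact ⟨⟨r, hr⟩⟩
      set K : ι → Set Y := fun r => {y | y ∈ Φ x ∧ u x y ≤ (r.1 : EReal)} with hKdef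
      have hKcomp : ∀ r : ι, IsCompact (K r) := fun r =>
        slice_compact Φ u hK x hx r.1
      have hKne : ∀ r : ι, (K r).Nonempty := by
        rintro ⟨r, hr⟩
        have := hr
        rw [hv, iInf_lt_iff] at this
        obtain ⟨y, hy⟩ := this
        rw [iInf_lt_iff] at hy
        obtain ⟨hyΦ, hyu⟩ := hy
        exact ⟨y, hyΦ, hyu.le⟩
      have hKcl : ∀ r : ι, IsClosed (K r) := fun r => (hKcomp r).isClosed
      have hdir : Directed (· ⊇ ·) K := by
        rintro ⟨r, hr⟩ ⟨s, hs⟩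
        refine ⟨⟨min r s, ?_⟩, ?_, ?_⟩
        · rcases min_cases r s with ⟨h, -⟩ | ⟨h, -⟩ <;> rw [h] <;> assumption
        · rintro y ⟨h1, h2⟩
          exact ⟨h1, h2.trans (by exact_mod_cast min_le_left r s)⟩
        · rintro y ⟨h1, h2⟩
          exact ⟨h1, h2.trans (by exact_mod_cast min_le_right r s)⟩
      have hmain : {y ∈ Φ x | u x y = v} = ⋂ r : ι, K r := by
        ext y
        simp only [Set.mem_setOf_eq, Set.mem_iInter]
        constructor
        · rintro ⟨h1, h2⟩ ⟨r, hr⟩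
          exact ⟨h1, h2.le.trans hr.le⟩
        · intro h
          obtain ⟨r0⟩ := ‹Nonempty ι›
          have h1 : y ∈ Φ x := (h r0).1
          refine ⟨h1, le_antisymm ?_ (iInf₂_le y h1)⟩
          refine le_of_forall_gt_imp_ge_of_dense ?_
          intro c hc
          obtain ⟨r, hr1, hr2⟩ := EReal.exists_between_coe_real hc
          exact ((h ⟨r, hr1⟩).2).trans hr2.le
      constructor
      · rw [hmain]
        exact IsCompact.nonempty_iInter_of_directed_nonempty_isCompact_isClosed
          K hdir hKne hKcomp hKcl
      · rw [hmain]
        obtain ⟨r0⟩ := ‹Nonempty ι›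
        exact (hKcomp r0).of_isClosed_subset (isClosed_iInter hKcl)
          (Set.iInter_subset K r0)
    · intro htop
      ext y
      simp only [Set.mem_setOf_eq]
      constructor
      · rintro ⟨h1, -⟩
        exact h1
      · intro h1
        refine ⟨h1, ?_⟩
        rw [htop]
        have hle : v ≤ u x y := iInf₂_le y h1
        rw [htop] at hle
        exact top_le_iff.mp hle
end
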